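/- arXiv:1903.00623 — 2 statements merged into one kernel-verified Lean document; each statement's English description precedes it below -/
import Mathlib

section
/- With notation as in the construction of the seed of model: define $(\omega^{i_1\dots i_k}_{yx})_j := (f^{i_1\dots i_k})_j(y) - (f^{i_1\dots i_k})_j(x) - \sum_{\ell=1}^{k-1} f^{i_1\dots i_\ell}(x)(\omega^{i_{\ell+1}\dots i_k}_{yx})_j$ and $(C^{i_1\dots i_k}_x)_j := (f^{i_1\dots i_k})_j(x) - \sum_{\ell=1}^{k-1} f^{i_1\dots i_\ell}(x)(C^{i_{\ell+1}\dots i_k}_x)_j$. Then for $k \geq 2$: (1) $(\omega^{i_1\dots i_k}_{yx})_j = \big(\sum_{m<j-1}(\omega^{i_1\dots i_{k-1}}_{yx})_m\big)(f^{i_k})_j(y) - \big(\sum_{m\geq j-1}(C^{i_1\dots i_{k-1}}_x)_m\big)(\omega^{i_k}_{yx})_j$, and (2) $(C^{i_1\dots i_k}_x)_j = -\big(\sum_{m\geq j-1}(C^{i_1\dots i_{k-1}}_x)_m\big)(f^{i_k})_j(x)$. -/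
noncomputable section

open MeasureTheory

/-- `d`-dimensional Euclidean space. -/
abbrev Ed (d : ℕ) := EuclideanSpace ℝ (Fin d)

/-- A dyadic Littlewood–Paley partition of unity `(χ, ρ)` on `ℝ^d`. -/
structure LPPartition (d : ℕ) where
  chi : Ed d → ℝ
  rho : Ed d → ℝ
  smooth_chi : ContDiff ℝ (⊤ : ℕ∞) chi
  smooth_rho : ContDiff ℝ (⊤ : ℕ∞) rho
  supp_chi : ∀ x : Ed d, (4 / 3 : ℝ) ≤ ‖x‖ → chi x = 0
  supp_rho : ∀ x : Ed d, ‖x‖ ≤ (3 / 4 : ℝ) ∨ (8 / 3 : ℝ) ≤ ‖x‖ → rho x = 0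
  partition : ∀ x : Ed d, chi x + ∑' j : ℕ, rho (((2 : ℝ) ^ j)⁻¹ • x) = 1

/-- The Fourier symbol of the `n`-th Littlewood–Paley block; the index `n : ℕ`
corresponds to the usual index `j = n - 1 ≥ -1`, so `n = 0` is the block `Δ_{-1}`
given by `χ` and `n = j + 1` is the block `Δ_j` given by `ρ(2^{-j}·)` for `j ≥ 0`. -/
def lpSymbol {d : ℕ} (P : LPPartition d) : ℕ → Ed d → ℝ
  | 0 => P.chi
  | n + 1 => fun x => P.rho (((2 : ℝ) ^ n)⁻¹ • x)

/-- The Littlewood–Paley block `Δ_{n-1} f = ℱ⁻¹(ρ_{n-1} ℱ f)`, realized as the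
convolution of `f` with the inverse Fourier transform of the symbol. -/
def lpBlock {d : ℕ} (P : LPPartition d) (n : ℕ) (f : Ed d → ℝ) (x : Ed d) : ℝ :=
  (∫ y : Ed d,
    FourierTransformInv.fourierInv (fun v => (lpSymbol P n v : ℂ)) y * (f (x - y) : ℂ)).re

/-- `f` has `𝒞^α = B^α_{∞,∞}` Besov norm bounded by `M`:
`2^{jα} ‖Δ_j f‖_{L^∞} ≤ M` for all `j ≥ -1` (here `j = n - 1`). -/
def HolderBdd {d : ℕ} (P : LPPartition d) (α : ℝ) (f : Ed d → ℝ) (M : ℝ) : Prop :=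
  ∀ (n : ℕ) (x : Ed d), (2 : ℝ) ^ (((n : ℝ) - 1) * α) * |lpBlock P n f x| ≤ M

/-- `f` is the sum of its Littlewood–Paley blocks (pointwise). -/
def LPSum {d : ℕ} (P : LPPartition d) (f : Ed d → ℝ) : Prop :=
  ∀ x : Ed d, HasSum (fun n : ℕ => lpBlock P n f x) (f x)

/-- The Bony paraproduct `f ≺ g = ∑_{j < k - 1} Δ_j f Δ_k g`. -/
def para {d : ℕ} (P : LPPartition d) (f g : Ed d → ℝ) : Ed d → ℝ := fun x =>
  ∑' k : ℕ, (∑ m ∈ Finset.range (k - 1), lpBlock P m f x) * lpBlock P k g x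

/-- The iterated paraproduct `(f₁, …, f_n)^≺ = (f₁, …, f_{n-1})^≺ ≺ f_n`. -/
def iterPara {d : ℕ} (P : LPPartition d) : List (Ed d → ℝ) → Ed d → ℝ
  | [] => fun _ => 0
  | f :: fs => fs.foldl (para P) f

/-- The coherence remainder `ω_{yx}` associated with a family `F` of functions indexed
by words: `ω_{yx}(l) = F l (y) - F l (x) - ∑_{ℓ=1}^{k-1} F(l₁…l_ℓ)(x) ω_{yx}(l_{ℓ+1}…l_k)`,
defined by recursion on the length of the word (the first argument is the length). -/
def omGen {d : ℕ} {β : Type*} (F : List β → Ed d → ℝ) :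
    ℕ → List β → Ed d → Ed d → ℝ
  | 0, _, _, _ => 0
  | n + 1, l, y, x =>
      F l y - F l x -
        ∑ ℓ ∈ Finset.range n, F (l.take (ℓ + 1)) x * omGen F (n - ℓ) (l.drop (ℓ + 1)) y x
  termination_by n => n
  decreasing_by omega

end

/-- The blocks `(f^{i₁…i_k})_j` of the modified iterated products, for a word given as
a list in *reversed* order `[f_{i_k}, …, f_{i₁}]` (the index `n : ℕ` is `j = n - 1`). -/
noncomputable def revModBlock {d : ℕ} (P : LPPartition d) :
    List (Ed d → ℝ) → ℕ → Ed d → ℝ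
  | [], _, _ => 0
  | [f], n, x => lpBlock P n f x
  | f :: g :: rest, n, x =>
      (∑ m ∈ Finset.range (n - 1), revModBlock P (g :: rest) m x) * lpBlock P n f x

/-- The modified iterated product `f^{i₁…i_k} = ∑_j (f^{i₁…i_k})_j` (reversed word). -/
noncomputable def wordFn {d : ℕ} (P : LPPartition d) (l : List (Ed d → ℝ)) (x : Ed d) : ℝ :=
  ∑' n : ℕ, revModBlock P l n x

/-- The blocks `(ω^{i₁…i_k}_{yx})_j := (f^{i₁…i_k})_j(y) - (f^{i₁…i_k})_j(x)
- ∑_{ℓ=1}^{k-1} f^{i₁…i_ℓ}(x) (ω^{i_{ℓ+1}…i_k}_{yx})_j`, for a reversed word; the first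
argument is the length of the word (recursion fuel). -/
noncomputable def omB {d : ℕ} (P : LPPartition d) :
    ℕ → List (Ed d → ℝ) → ℕ → Ed d → Ed d → ℝ
  | 0, _, _, _, _ => 0
  | n + 1, r, j, y, x =>
      revModBlock P r j y - revModBlock P r j x -
        ∑ i ∈ Finset.range n,
          wordFn P (r.drop (n - i)) x * omB P (n - i) (r.take (n - i)) j y x
  termination_by n => n
  decreasing_by omega

/-- The blocks `(C^{i₁…i_k}_x)_j := (f^{i₁…i_k})_j(x)
- ∑_{ℓ=1}^{k-1} f^{i₁…i_ℓ}(x) (C^{i_{ℓ+1}…i_k}_x)_j`, for a reversed word; the first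
argument is the length of the word (recursion fuel). -/
noncomputable def cB {d : ℕ} (P : LPPartition d) :
    ℕ → List (Ed d → ℝ) → ℕ → Ed d → ℝ
  | 0, _, _, _ => 0
  | n + 1, r, j, x =>
      revModBlock P r j x -
        ∑ i ∈ Finset.range n,
          wordFn P (r.drop (n - i)) x * cB P (n - i) (r.take (n - i)) j x
  termination_by n => n
  decreasing_by omega


private lemma revModBlock_cons' {d : ℕ} (P : LPPartition d) (f : Ed d → ℝ)
    {rest : List (Ed d → ℝ)} (h : rest ≠ []) (n : ℕ) (x : Ed d) :
    revModBlock P (f :: rest) n x =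
      (∑ m ∈ Finset.range (n - 1), revModBlock P rest m x) * lpBlock P n f x := by
  obtain ⟨g, t, rfl⟩ := List.exists_cons_of_ne_nil h; rfl

private lemma sum_reindex' (n : ℕ) (F : ℕ → ℝ) :
    ∑ i ∈ Finset.range n, F (n - i) = ∑ m ∈ Finset.range n, F (m + 1) := by
  rw [← Finset.sum_range_reflect]
  refine Finset.sum_congr rfl fun i hi => ?_
  congr 1
  simp only [Finset.mem_range] at hi
  omega

private lemma omB_succ' {d : ℕ} (P : LPPartition d) (n : ℕ) (r : List (Ed d → ℝ))
    (j : ℕ) (y x : Ed d) :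
    omB P (n + 1) r j y x = revModBlock P r j y - revModBlock P r j x -
      ∑ m ∈ Finset.range n,
        wordFn P (r.drop (m + 1)) x * omB P (m + 1) (r.take (m + 1)) j y x := by
  rw [omB, sum_reindex' n (fun m => wordFn P (r.drop m) x * omB P m (r.take m) j y x)]

private lemma cB_succ' {d : ℕ} (P : LPPartition d) (n : ℕ) (r : List (Ed d → ℝ))
    (j : ℕ) (x : Ed d) :
    cB P (n + 1) r j x = revModBlock P r j x -
      ∑ m ∈ Finset.range n,
        wordFn P (r.drop (m + 1)) x * cB P (m + 1) (r.take (m + 1)) j x := by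
  rw [cB, sum_reindex' n (fun m => wordFn P (r.drop m) x * cB P m (r.take m) j x)]

private lemma omB_one' {d : ℕ} (P : LPPartition d) (f : Ed d → ℝ) (j : ℕ) (y x : Ed d) :
    omB P 1 [f] j y x = lpBlock P j f y - lpBlock P j f x := by
  rw [omB_succ' P 0]
  simp [revModBlock]

private lemma cB_one' {d : ℕ} (P : LPPartition d) (f : Ed d → ℝ) (j : ℕ) (x : Ed d) :
    cB P 1 [f] j x = lpBlock P j f x := by
  rw [cB_succ' P 0]
  simp [revModBlock]

private lemma aux_block_rec {d : ℕ} (P : LPPartition d) (f : Ed d → ℝ) :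
    ∀ (k : ℕ) (rest : List (Ed d → ℝ)), rest.length = k → rest ≠ [] →
    (∀ (l : List (Ed d → ℝ)) (x : Ed d), l <:+: (f :: rest) →
      Summable (fun m : ℕ => revModBlock P l m x) ∧
      Summable (fun m : ℕ => cB P l.length l m x)) →
    ∀ (j : ℕ) (y x : Ed d),
    omB P (k + 1) (f :: rest) j y x =
        (∑ m ∈ Finset.range (j - 1), omB P k rest m y x) * lpBlock P j f y -
          (∑' i : ℕ, cB P k rest (i + (j - 1)) x) *
            (lpBlock P j f y - lpBlock P j f x) ∧
    cB P (k + 1) (f :: rest) j x =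
        -(∑' i : ℕ, cB P k rest (i + (j - 1)) x) * lpBlock P j f x := by
  intro K
  induction K using Nat.strong_induction_on with
  | _ K ih =>
  match K with
  | 0 =>
    intro rest hk hne _ _ _ _
    rw [List.length_eq_zero_iff] at hk
    exact absurd hk hne
  | (k + 1) =>
  intro rest hk hne hsum j y x
  have hinf_rest : rest <:+: (f :: rest) := (List.suffix_cons f rest).isInfix
  have hSB : ∀ z : Ed d, Summable (fun p : ℕ => revModBlock P rest p z) :=
    fun z => (hsum rest z hinf_rest).1
  have hSC : Summable (fun p : ℕ => cB P (k + 1) rest p x) := by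
    have h := (hsum rest x hinf_rest).2
    rwa [hk] at h
  have hlen_take : ∀ m : ℕ, m < k + 1 → (rest.take (m + 1)).length = m + 1 := by
    intro m hm; rw [List.length_take, hk]; omega
  have hinf_take : ∀ m : ℕ, (rest.take (m + 1)) <:+: (f :: rest) :=
    fun m => ((List.take_prefix (m + 1) rest).isInfix).trans hinf_rest
  have hSCm : ∀ m : ℕ, m < k + 1 →
      Summable (fun p : ℕ => cB P (m + 1) (rest.take (m + 1)) p x) := by
    intro m hm
    have h := (hsum (rest.take (m + 1)) x (hinf_take m)).2
    rwa [hlen_take m hm] at h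
  -- the induction hypothesis applied to the prefixes `rest.take (m+1)`
  have hIH : ∀ m ∈ Finset.range k,
      (omB P (m + 1 + 1) (f :: rest.take (m + 1)) j y x =
        (∑ p ∈ Finset.range (j - 1), omB P (m + 1) (rest.take (m + 1)) p y x) *
            lpBlock P j f y -
          (∑' i : ℕ, cB P (m + 1) (rest.take (m + 1)) (i + (j - 1)) x) *
            (lpBlock P j f y - lpBlock P j f x)) ∧
      (cB P (m + 1 + 1) (f :: rest.take (m + 1)) j x =
        -(∑' i : ℕ, cB P (m + 1) (rest.take (m + 1)) (i + (j - 1)) x) *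
            lpBlock P j f x) := by
    intro m hm
    simp only [Finset.mem_range] at hm
    have hlen : (rest.take (m + 1)).length = m + 1 := hlen_take m (by omega)
    have hne' : rest.take (m + 1) ≠ [] := by
      intro h
      rw [h] at hlen
      simp at hlen
    have hpre : (f :: rest.take (m + 1)) <:+: (f :: rest) := by
      have he : f :: rest.take (m + 1) = (f :: rest).take (m + 2) := rfl
      rw [he]
      exact (List.take_prefix _ _).isInfix
    exact ih (m + 1) (by omega) (rest.take (m + 1)) hlen hne'
      (fun l z hl => hsum l z (hl.trans hpre)) j y x
  -- the key identity (K)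
  have hK : (∑' i : ℕ, cB P (k + 1) rest (i + (j - 1)) x) =
      wordFn P rest x - (∑ p ∈ Finset.range (j - 1), revModBlock P rest p x) -
      ∑ m ∈ Finset.range k, wordFn P (rest.drop (m + 1)) x *
        (∑' i : ℕ, cB P (m + 1) (rest.take (m + 1)) (i + (j - 1)) x) := by
    have hST : ∀ m ∈ Finset.range k, Summable (fun i : ℕ =>
        wordFn P (rest.drop (m + 1)) x * cB P (m + 1) (rest.take (m + 1)) (i + (j - 1)) x) :=
      fun m hm => (((summable_nat_add_iff (j - 1)).2
        (hSCm m (by simp only [Finset.mem_range] at hm; omega))).mul_left _)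
    calc (∑' i : ℕ, cB P (k + 1) rest (i + (j - 1)) x)
        = ∑' i : ℕ, (revModBlock P rest (i + (j - 1)) x -
            ∑ m ∈ Finset.range k, wordFn P (rest.drop (m + 1)) x *
              cB P (m + 1) (rest.take (m + 1)) (i + (j - 1)) x) :=
          tsum_congr fun i => cB_succ' P k rest (i + (j - 1)) x
      _ = (∑' i : ℕ, revModBlock P rest (i + (j - 1)) x) -
          ∑' i : ℕ, ∑ m ∈ Finset.range k, wordFn P (rest.drop (m + 1)) x *
              cB P (m + 1) (rest.take (m + 1)) (i + (j - 1)) x :=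
          Summable.tsum_sub ((summable_nat_add_iff (j - 1)).2 (hSB x)) (summable_sum hST)
      _ = (wordFn P rest x - ∑ p ∈ Finset.range (j - 1), revModBlock P rest p x) -
          ∑ m ∈ Finset.range k, wordFn P (rest.drop (m + 1)) x *
            (∑' i : ℕ, cB P (m + 1) (rest.take (m + 1)) (i + (j - 1)) x) := by
          congr 1
          · have h := Summable.sum_add_tsum_nat_add (f := fun p => revModBlock P rest p x)
              (j - 1) (hSB x)
            rw [wordFn]
            linarith [h]
          · rw [Summable.tsum_finsetSum hST]
            exact Finset.sum_congr rfl fun m _ => tsum_mul_left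
  -- expansion of the sum of blocks of `omB`/`cB` on `rest`
  have hRω : ∑ p ∈ Finset.range (j - 1), omB P (k + 1) rest p y x =
      (∑ p ∈ Finset.range (j - 1), revModBlock P rest p y) -
      (∑ p ∈ Finset.range (j - 1), revModBlock P rest p x) -
      ∑ m ∈ Finset.range k, wordFn P (rest.drop (m + 1)) x *
        (∑ p ∈ Finset.range (j - 1), omB P (m + 1) (rest.take (m + 1)) p y x) := by
    calc ∑ p ∈ Finset.range (j - 1), omB P (k + 1) rest p y x
        = ∑ p ∈ Finset.range (j - 1), (revModBlock P rest p y - revModBlock P rest p x -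
            ∑ m ∈ Finset.range k, wordFn P (rest.drop (m + 1)) x *
              omB P (m + 1) (rest.take (m + 1)) p y x) :=
          Finset.sum_congr rfl fun p _ => omB_succ' P k rest p y x
      _ = _ := by
          rw [Finset.sum_sub_distrib, Finset.sum_sub_distrib]
          congr 1
          rw [Finset.sum_comm]
          exact Finset.sum_congr rfl fun m _ => (Finset.mul_sum _ _ _).symm
  -- main expansion of the left-hand sides
  have hL : omB P (k + 1 + 1) (f :: rest) j y x =
      ((∑ p ∈ Finset.range (j - 1), revModBlock P rest p y) * lpBlock P j f y -
       (∑ p ∈ Finset.range (j - 1), revModBlock P rest p x) * lpBlock P j f x) -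
      ((∑ m ∈ Finset.range k, wordFn P (rest.drop (m + 1)) x *
          omB P (m + 1 + 1) (f :: rest.take (m + 1)) j y x) +
        wordFn P rest x * (lpBlock P j f y - lpBlock P j f x)) := by
    rw [omB_succ' P (k + 1)]
    simp only [List.drop_succ_cons, List.take_succ_cons]
    rw [Finset.sum_range_succ']
    simp only [List.drop_zero, List.take_zero]
    rw [omB_one', revModBlock_cons' P f hne, revModBlock_cons' P f hne]
  have hLC : cB P (k + 1 + 1) (f :: rest) j x =
      (∑ p ∈ Finset.range (j - 1), revModBlock P rest p x) * lpBlock P j f x -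
      ((∑ m ∈ Finset.range k, wordFn P (rest.drop (m + 1)) x *
          cB P (m + 1 + 1) (f :: rest.take (m + 1)) j x) +
        wordFn P rest x * lpBlock P j f x) := by
    rw [cB_succ' P (k + 1)]
    simp only [List.drop_succ_cons, List.take_succ_cons]
    rw [Finset.sum_range_succ']
    simp only [List.drop_zero, List.take_zero]
    rw [cB_one', revModBlock_cons' P f hne]
  -- rewrite the inner sums with the induction hypothesis
  have hL1 : ∑ m ∈ Finset.range k, wordFn P (rest.drop (m + 1)) x *
        omB P (m + 1 + 1) (f :: rest.take (m + 1)) j y x =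
      (∑ m ∈ Finset.range k, wordFn P (rest.drop (m + 1)) x *
        (∑ p ∈ Finset.range (j - 1), omB P (m + 1) (rest.take (m + 1)) p y x)) *
          lpBlock P j f y -
      (∑ m ∈ Finset.range k, wordFn P (rest.drop (m + 1)) x *
        (∑' i : ℕ, cB P (m + 1) (rest.take (m + 1)) (i + (j - 1)) x)) *
          (lpBlock P j f y - lpBlock P j f x) := by
    refine Eq.trans (Finset.sum_congr rfl fun m hm => by rw [(hIH m hm).1]) ?_
    rw [Finset.sum_mul, Finset.sum_mul, ← Finset.sum_sub_distrib]
    exact Finset.sum_congr rfl fun m hm => by ring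
  have hL2 : ∑ m ∈ Finset.range k, wordFn P (rest.drop (m + 1)) x *
        cB P (m + 1 + 1) (f :: rest.take (m + 1)) j x =
      -(∑ m ∈ Finset.range k, wordFn P (rest.drop (m + 1)) x *
        (∑' i : ℕ, cB P (m + 1) (rest.take (m + 1)) (i + (j - 1)) x)) *
          lpBlock P j f x := by
    refine Eq.trans (Finset.sum_congr rfl fun m hm => by rw [(hIH m hm).2]) ?_
    rw [neg_mul, Finset.sum_mul, ← Finset.sum_neg_distrib]
    exact Finset.sum_congr rfl fun m hm => by ring
  constructor
  · rw [hL, hL1, hRω]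
    linear_combination (lpBlock P j f y - lpBlock P j f x) * hK
  · rw [hLC, hL2]
    linear_combination lpBlock P j f x * hK

/-- Recursive formulas for the blocks of the coherence functions: for words of length
`k ≥ 2` (reversed word `f :: rest` with head letter `f = f_{i_k}`), assuming all the
relevant series converge absolutely,
`(ω^{i₁…i_k}_{yx})_j = (∑_{m<j-1}(ω^{i₁…i_{k-1}}_{yx})_m)(f^{i_k})_j(y)
  - (∑_{m≥j-1}(C^{i₁…i_{k-1}}_x)_m)(ω^{i_k}_{yx})_j` and
`(C^{i₁…i_k}_x)_j = -(∑_{m≥j-1}(C^{i₁…i_{k-1}}_x)_m)(f^{i_k})_j(x)`. -/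
theorem block_recursive_formulas (d : ℕ) (P : LPPartition d)
    (f : Ed d → ℝ) (rest : List (Ed d → ℝ)) (hrest : rest ≠ [])
    (hsum : ∀ (l : List (Ed d → ℝ)) (x : Ed d), l <:+: (f :: rest) →
      Summable (fun m : ℕ => revModBlock P l m x) ∧
      Summable (fun m : ℕ => cB P l.length l m x))
    (j : ℕ) (y x : Ed d) :
    omB P (f :: rest).length (f :: rest) j y x =
        (∑ m ∈ Finset.range (j - 1), omB P rest.length rest m y x) * lpBlock P j f y -
          (∑' i : ℕ, cB P rest.length rest (i + (j - 1)) x) *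
            (lpBlock P j f y - lpBlock P j f x) ∧
    cB P (f :: rest).length (f :: rest) j x =
        -(∑' i : ℕ, cB P rest.length rest (i + (j - 1)) x) * lpBlock P j f x := by
  have h := aux_block_rec P f rest.length rest rfl hrest hsum j y x
  simpa [List.length_cons] using h
end

section
/- Call a family $\{\tau_1,\dots,\tau_m\}$ a partition of the word $(i_1\dots i_k)$ if there exist $1 = p_1 < p_2 < \cdots < p_m < p_{m+1} = k+1$ with $\tau_\ell = (i_{p_\ell}\dots i_{p_{\ell+1}-1})$. Suppose functions $f^{\tau}$ and $\langle\tau\rangle$ indexed by words satisfy the atomic decomposition $f^{i_1\dots i_k} = \sum_{\Pi = \{\tau_1,\dots,\tau_m\}} (\langle\tau_1\rangle, \dots, \langle\tau_m\rangle)^{\prec}$ (sum over all partitions of $(i_1\dots i_k)$). Then the coherence differences satisfy $\omega^{i_1\dots i_k}_{yx}(F) = \sum_{\Pi=\{\tau_1,\dots,\tau_m\}} \omega^{\prec}_{yx}(\langle\tau_1\rangle,\dots,\langle\tau_m\rangle)$, where $\omega_{yx}^{i_1\dots i_k}(F) = f^{i_1\dots i_k}(y) - f^{i_1\dots i_k}(x)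 - \sum_{\ell=1}^{k-1} f^{i_1\dots i_\ell}(x)\,\omega^{i_{\ell+1}\dots i_k}_{yx}(F)$. -/
/-! ### Auxiliary material for the proof -/

section Aux

lemma splitAux_append {α : Type*} (b₁ b₂ : List ℕ) (l : List α) :
    l.splitWrtCompositionAux (b₁ ++ b₂) =
      (l.take b₁.sum).splitWrtCompositionAux b₁ ++
        (l.drop b₁.sum).splitWrtCompositionAux b₂ := by
  induction b₁ generalizing l with
  | nil => simp [List.splitWrtCompositionAux]
  | cons a t ih =>
      have h1 : List.take a (List.take (a + t.sum) l) = List.take a l := by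
        rw [List.take_take, min_eq_left (Nat.le_add_right _ _)]
      have h2 : List.drop a (List.take (a + t.sum) l) = List.take t.sum (List.drop a l) := by
        rw [List.drop_take]; congr 1; omega
      have h3 : List.drop (a + t.sum) l = List.drop t.sum (List.drop a l) := by
        rw [List.drop_drop]
      rw [List.cons_append, List.splitWrtCompositionAux_cons, List.sum_cons,
        List.splitWrtCompositionAux_cons, ih, h1, h2, h3, List.cons_append]

/-- Concatenation of two compositions. -/
def joinC {p q : ℕ} (c₁ : Composition p) (c₂ : Composition q) : Composition (p + q) where
  blocks := c₁.blocks ++ c₂.blocks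
  blocks_pos := by
    intro i hi
    rcases List.mem_append.1 hi with h | h
    exacts [c₁.blocks_pos h, c₂.blocks_pos h]
  blocks_sum := by simp [c₁.blocks_sum, c₂.blocks_sum]

/-- Cast a composition along an equality of naturals. -/
def castC {p q : ℕ} (h : p = q) (c : Composition p) : Composition q := h ▸ c

lemma blocks_castC {p q : ℕ} (h : p = q) (c : Composition p) :
    (castC h c).blocks = c.blocks := by subst h; rfl

/-- Forward map of the bijection: glue a composition of `ℓ+1` and one of `n-ℓ`
into a composition of `n+1`. -/
def fwd (n ℓ : ℕ) (h : ℓ < n) (p : Composition (ℓ + 1) × Composition (n - ℓ)) :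
    Composition (n + 1) :=
  castC (by omega) (joinC p.1 p.2)

lemma fwd_blocks (n ℓ : ℕ) (h : ℓ < n) (p : Composition (ℓ + 1) × Composition (n - ℓ)) :
    (fwd n ℓ h p).blocks = p.1.blocks ++ p.2.blocks := blocks_castC _ _

lemma fwd_length (n ℓ : ℕ) (h : ℓ < n) (p : Composition (ℓ + 1) × Composition (n - ℓ)) :
    (fwd n ℓ h p).length = p.1.length + p.2.length := by
  rw [← Composition.blocks_length, fwd_blocks, List.length_append,
    Composition.blocks_length, Composition.blocks_length]

lemma split_fwd {α : Type*} (n ℓ : ℕ) (h : ℓ < n)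
    (p : Composition (ℓ + 1) × Composition (n - ℓ)) (w : List α) :
    w.splitWrtComposition (fwd n ℓ h p) =
      (w.take (ℓ + 1)).splitWrtComposition p.1 ++
        (w.drop (ℓ + 1)).splitWrtComposition p.2 := by
  show List.splitWrtCompositionAux w (fwd n ℓ h p).blocks = _
  rw [fwd_blocks, splitAux_append, p.1.blocks_sum]
  rfl

lemma bwd_facts (n : ℕ) (c : Composition (n + 1)) (j : ℕ) (hj : j + 1 < c.length) :
    j + 1 ≤ (c.blocks.take (j + 1)).sum ∧ 1 ≤ (c.blocks.drop (j + 1)).sum ∧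
      (c.blocks.take (j + 1)).sum + (c.blocks.drop (j + 1)).sum = n + 1 := by
  have hbl : c.blocks.length = c.length := c.blocks_length
  refine ⟨?_, ?_, ?_⟩
  · have h := List.length_le_sum_of_one_le (c.blocks.take (j + 1))
      (fun i hi => c.one_le_blocks (List.mem_of_mem_take hi))
    rwa [List.length_take, min_eq_left (by omega)] at h
  · have h := List.length_le_sum_of_one_le (c.blocks.drop (j + 1))
      (fun i hi => c.one_le_blocks (List.mem_of_mem_drop hi))
    rw [List.length_drop] at h
    omega
  · rw [List.sum_take_add_sum_drop, c.blocks_sum]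

/-- Backward map of the bijection: cut a composition of `n+1` after its `(j+1)`-st block. -/
def bwd (n : ℕ) (c : Composition (n + 1)) (j : ℕ) (hj : j + 1 < c.length) :
    Σ ℓ : ℕ, Composition (ℓ + 1) × Composition (n - ℓ) :=
  ⟨(c.blocks.take (j + 1)).sum - 1,
    (⟨c.blocks.take (j + 1), fun {i} hi => c.blocks_pos (List.mem_of_mem_take hi),
        by have := bwd_facts n c j hj; omega⟩,
     ⟨c.blocks.drop (j + 1), fun {i} hi => c.blocks_pos (List.mem_of_mem_drop hi),
        by have := bwd_facts n c j hj; omega⟩)⟩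

lemma bwd_fst (n : ℕ) (c : Composition (n + 1)) (j : ℕ) (hj : j + 1 < c.length) :
    (bwd n c j hj).1 = (c.blocks.take (j + 1)).sum - 1 := rfl

lemma bwd_fst_lt (n : ℕ) (c : Composition (n + 1)) (j : ℕ) (hj : j + 1 < c.length) :
    (bwd n c j hj).1 < n := by
  have := bwd_facts n c j hj
  rw [bwd_fst]
  omega

lemma bwd_snd_fst_blocks (n : ℕ) (c : Composition (n + 1)) (j : ℕ) (hj : j + 1 < c.length) :
    (bwd n c j hj).2.1.blocks = c.blocks.take (j + 1) := rfl

lemma bwd_snd_snd_blocks (n : ℕ) (c : Composition (n + 1)) (j : ℕ) (hj : j + 1 < c.length) :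
    (bwd n c j hj).2.2.blocks = c.blocks.drop (j + 1) := rfl

lemma bwd_snd_fst_length (n : ℕ) (c : Composition (n + 1)) (j : ℕ) (hj : j + 1 < c.length) :
    (bwd n c j hj).2.1.length = j + 1 := by
  have hbl : c.blocks.length = c.length := c.blocks_length
  rw [← Composition.blocks_length, bwd_snd_fst_blocks, List.length_take]
  omega

lemma sigma_pair_ext {n ℓ ℓ' : ℕ}
    (p : Composition (ℓ + 1) × Composition (n - ℓ))
    (p' : Composition (ℓ' + 1) × Composition (n - ℓ'))
    (h : ℓ = ℓ') (h1 : p.1.blocks = p'.1.blocks) (h2 : p.2.blocks = p'.2.blocks) :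
    (⟨ℓ, p⟩ : Σ ℓ : ℕ, Composition (ℓ + 1) × Composition (n - ℓ)) = ⟨ℓ', p'⟩ := by
  subst h
  have e : p = p' := Prod.ext (Composition.ext h1) (Composition.ext h2)
  rw [e]

lemma bwd_eta (n : ℕ) (c : Composition (n + 1)) (j : ℕ) (hj : j + 1 < c.length) :
    bwd n c j hj =
      ⟨(bwd n c j hj).1, ((bwd n c j hj).2.1, (bwd n c j hj).2.2)⟩ := rfl

lemma bwd_fwd (n ℓ : ℕ) (h : ℓ < n) (p : Composition (ℓ + 1) × Composition (n - ℓ))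
    (hj : (p.1.length - 1) + 1 < (fwd n ℓ h p).length) :
    bwd n (fwd n ℓ h p) (p.1.length - 1) hj = ⟨ℓ, p⟩ := by
  have h1 : 0 < p.1.length := p.1.length_pos_of_pos (Nat.succ_pos _)
  have hlen : p.1.length - 1 + 1 = p.1.blocks.length := by
    rw [Composition.blocks_length]; omega
  have htake : (fwd n ℓ h p).blocks.take (p.1.length - 1 + 1) = p.1.blocks := by
    rw [fwd_blocks, hlen, List.take_left]
  have hdrop : (fwd n ℓ h p).blocks.drop (p.1.length - 1 + 1) = p.2.blocks := by
    rw [fwd_blocks, hlen, List.drop_left]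
  rw [bwd_eta]
  refine sigma_pair_ext _ _ ?_ ?_ ?_
  · rw [bwd_fst, htake, p.1.blocks_sum]; omega
  · rw [bwd_snd_fst_blocks, htake]
  · rw [bwd_snd_snd_blocks, hdrop]

lemma fwd_bwd (n : ℕ) (c : Composition (n + 1)) (j : ℕ) (hj : j + 1 < c.length)
    (h : (bwd n c j hj).1 < n) :
    (⟨fwd n (bwd n c j hj).1 h (bwd n c j hj).2, (bwd n c j hj).2.1.length - 1⟩ :
      Σ c : Composition (n + 1), ℕ) = ⟨c, j⟩ := by
  refine Sigma.ext ?_ (heq_of_eq ?_)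
  · apply Composition.ext
    rw [fwd_blocks, bwd_snd_fst_blocks, bwd_snd_snd_blocks]
    exact List.take_append_drop _ _
  · show (bwd n c j hj).2.1.length - 1 = j
    rw [bwd_snd_fst_length]; omega

lemma omGen_succ {d : ℕ} {β : Type*} (F : List β → Ed d → ℝ) (n : ℕ) (l : List β)
    (y x : Ed d) :
    omGen F (n + 1) l y x = F l y - F l x -
      ∑ ℓ ∈ Finset.range n, F (l.take (ℓ + 1)) x * omGen F (n - ℓ) (l.drop (ℓ + 1)) y x := by
  rw [omGen]

lemma key_lemma (d : ℕ) (P : LPPartition d) {I : Type*}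
    (F : List I → Ed d → ℝ) (A : List I → Ed d → ℝ)
    (hatomic : ∀ w : List I, w ≠ [] → ∀ x : Ed d,
      F w x = ∑ c : Composition w.length,
        iterPara P ((w.splitWrtComposition c).map A) x) :
    ∀ k : ℕ, 0 < k → ∀ w : List I, w.length = k → ∀ y x : Ed d,
      omGen F k w y x =
        ∑ c : Composition k,
          omGen (iterPara P) c.length ((w.splitWrtComposition c).map A) y x := by
  have hat' : ∀ (k : ℕ) (w : List I), w.length = k → 0 < k → ∀ x : Ed d,
      F w x = ∑ c : Composition k,
        iterPara P ((w.splitWrtComposition c).map A) x := by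
    intro k w hl hk x
    subst hl
    exact hatomic w (List.ne_nil_of_length_pos hk) x
  set G := iterPara P with hG
  intro k
  induction k using Nat.strong_induction_on with
  | _ k IH =>
    intro hk w hl y x
    obtain ⟨n, rfl⟩ : ∃ n, k = n + 1 := ⟨k - 1, by omega⟩
    rw [omGen_succ]
    -- Rewrite the RHS: unfold each `omGen G c.length`.
    have hRc : ∀ c : Composition (n + 1),
        omGen G c.length ((w.splitWrtComposition c).map A) y x =
          (G ((w.splitWrtComposition c).map A) y - G ((w.splitWrtComposition c).map A) x) -
            ∑ j ∈ Finset.range (c.length - 1),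
              G (((w.splitWrtComposition c).map A).take (j + 1)) x *
                omGen G (c.length - 1 - j) (((w.splitWrtComposition c).map A).drop (j + 1)) y x := by
      intro c
      have hpos : 0 < c.length := c.length_pos_of_pos (Nat.succ_pos n)
      obtain ⟨m, hm⟩ : ∃ m, c.length = m + 1 := ⟨c.length - 1, by omega⟩
      rw [hm, omGen_succ]
      simp only [Nat.add_sub_cancel]
    simp only [hRc]
    rw [Finset.sum_sub_distrib, Finset.sum_sub_distrib]
    rw [← hat' (n + 1) w hl (Nat.succ_pos n) y, ← hat' (n + 1) w hl (Nat.succ_pos n) x]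
    congr 1
    -- Rewrite the LHS summands using `hat'` and the induction hypothesis.
    have hstep : ∀ ℓ ∈ Finset.range n,
        F (w.take (ℓ + 1)) x * omGen F (n - ℓ) (w.drop (ℓ + 1)) y x =
          ∑ p : Composition (ℓ + 1) × Composition (n - ℓ),
            G (((w.take (ℓ + 1)).splitWrtComposition p.1).map A) x *
              omGen G p.2.length (((w.drop (ℓ + 1)).splitWrtComposition p.2).map A) y x := by
      intro ℓ hℓ
      have hℓn : ℓ < n := Finset.mem_range.1 hℓ
      have hlen1 : (w.take (ℓ + 1)).length = ℓ + 1 := by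
        rw [List.length_take]; omega
      have hlen2 : (w.drop (ℓ + 1)).length = n - ℓ := by
        rw [List.length_drop]; omega
      rw [hat' (ℓ + 1) (w.take (ℓ + 1)) hlen1 (Nat.succ_pos ℓ) x,
        IH (n - ℓ) (by omega) (by omega) (w.drop (ℓ + 1)) hlen2 y x,
        Finset.sum_mul_sum, Fintype.sum_prod_type]
    rw [Finset.sum_congr rfl hstep]
    -- Convert both sides to sums over sigma types and apply the bijection.
    rw [Finset.sum_sigma' (Finset.range n)
      (fun ℓ => (Finset.univ : Finset (Composition (ℓ + 1) × Composition (n - ℓ))))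
      (fun ℓ p => G (((w.take (ℓ + 1)).splitWrtComposition p.1).map A) x *
        omGen G p.2.length (((w.drop (ℓ + 1)).splitWrtComposition p.2).map A) y x)]
    rw [Finset.sum_sigma' (Finset.univ : Finset (Composition (n + 1)))
      (fun c => Finset.range (c.length - 1))
      (fun c j => G (((w.splitWrtComposition c).map A).take (j + 1)) x *
        omGen G (c.length - 1 - j) (((w.splitWrtComposition c).map A).drop (j + 1)) y x)]
    refine Finset.sum_bij'
      (fun a ha => (⟨fwd n a.1 (Finset.mem_range.1 (Finset.mem_sigma.1 ha).1) a.2,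
          a.2.1.length - 1⟩ : Σ c : Composition (n + 1), ℕ))
      (fun b hb => bwd n b.1 b.2 (by
          have := Finset.mem_range.1 (Finset.mem_sigma.1 hb).2; omega))
      ?_ ?_ ?_ ?_ ?_
    · -- i maps into t
      intro a ha
      have hℓn : a.1 < n := Finset.mem_range.1 (Finset.mem_sigma.1 ha).1
      refine Finset.mem_sigma.2 ⟨Finset.mem_univ _, Finset.mem_range.2 ?_⟩
      have h1 : 0 < a.2.1.length := a.2.1.length_pos_of_pos (Nat.succ_pos _)
      have h2 : 0 < a.2.2.length := a.2.2.length_pos_of_pos (by omega)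
      show a.2.1.length - 1 < _
      rw [fwd_length]
      omega
    · -- j maps into s
      intro b hb
      refine Finset.mem_sigma.2 ⟨Finset.mem_range.2 ?_, Finset.mem_univ _⟩
      exact bwd_fst_lt _ _ _ _
    · -- left inverse
      intro a ha
      have hℓn : a.1 < n := Finset.mem_range.1 (Finset.mem_sigma.1 ha).1
      obtain ⟨ℓ, p⟩ := a
      exact bwd_fwd n ℓ hℓn p _
    · -- right inverse
      intro b hb
      obtain ⟨c, j⟩ := b
      exact fwd_bwd n c j _ _
    · -- values agree
      intro a ha
      have hℓn : a.1 < n := Finset.mem_range.1 (Finset.mem_sigma.1 ha).1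
      obtain ⟨ℓ, p⟩ := a
      dsimp only at hℓn ⊢
      have h1 : 0 < p.1.length := p.1.length_pos_of_pos (Nat.succ_pos _)
      have h2 : 0 < p.2.length := p.2.length_pos_of_pos (by omega)
      have hmap : (w.splitWrtComposition (fwd n ℓ hℓn p)).map A =
          (((w.take (ℓ + 1)).splitWrtComposition p.1).map A) ++
            (((w.drop (ℓ + 1)).splitWrtComposition p.2).map A) := by
        rw [split_fwd, List.map_append]
      have hlen1 : ((((w.take (ℓ + 1)).splitWrtComposition p.1).map A)).length
          = p.1.length - 1 + 1 := by
        rw [List.length_map, List.length_splitWrtComposition]; omega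
      have htake : ((w.splitWrtComposition (fwd n ℓ hℓn p)).map A).take (p.1.length - 1 + 1) =
          ((w.take (ℓ + 1)).splitWrtComposition p.1).map A := by
        rw [hmap, List.take_left' hlen1]
      have hdrop : ((w.splitWrtComposition (fwd n ℓ hℓn p)).map A).drop (p.1.length - 1 + 1) =
          ((w.drop (ℓ + 1)).splitWrtComposition p.2).map A := by
        rw [hmap, List.drop_left' hlen1]
      rw [htake, hdrop, fwd_length]
      have he : p.1.length + p.2.length - 1 - (p.1.length - 1) = p.2.length := by omega
      rw [he]

end Aux

/-- Partition identity for coherence differences: if a family `F` of functions indexed by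
words admits the atomic decomposition
`f^{i₁…i_k} = ∑_{Π={τ₁,…,τ_m}} (⟨τ₁⟩,…,⟨τ_m⟩)^≺` (sum over all partitions of the word
`(i₁…i_k)` into consecutive nonempty blocks, i.e. over compositions of `k`), then
`ω^{i₁…i_k}_{yx}(F) = ∑_{Π={τ₁,…,τ_m}} ω^≺_{yx}(⟨τ₁⟩,…,⟨τ_m⟩)`. -/
theorem coherence_partition_identity (d : ℕ) (P : LPPartition d) {I : Type*}
    (F : List I → Ed d → ℝ) (A : List I → Ed d → ℝ)
    (hatomic : ∀ w : List I, w ≠ [] → ∀ x : Ed d,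
      F w x = ∑ c : Composition w.length,
        iterPara P ((w.splitWrtComposition c).map A) x)
    (w : List I) (hw : w ≠ []) (y x : Ed d) :
    omGen F w.length w y x =
      ∑ c : Composition w.length,
        omGen (iterPara P) ((w.splitWrtComposition c).map A).length
          ((w.splitWrtComposition c).map A) y x := by
  have hk : 0 < w.length := List.length_pos_iff.2 hw
  have := key_lemma d P F A hatomic w.length hk w rfl y x
  simpa only [List.length_map, List.length_splitWrtComposition] using this
end
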